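/- arXiv:2203.07787 — 2 statements merged into one kernel-verified Lean document; each statement's English description precedes it below -/
import Mathlib

section
/- Define the character χ^s/χ of K^× by (χ^s/χ)(x) = χ(s(x))·χ(x)^{-1}. Then χ^s/χ factors through the norm (i.e. there exists a character θ of F^× with (χ^s/χ)(x) = θ(Nm_{K|F}(x)) for all x) if and only if χ^s/χ is quadratic, i.e. (χ(s(x))·χ(x)^{-1})² = 1 for all x ∈ K^×. -/
/-!
Write `δ = χ^s/χ`. Since `s` is an involution, `δ ∘ s = δ⁻¹`, so `δ` is quadratic iff it
is `s`-invariant. A character of the form `θ ∘ Nm` is `s`-invariant because `Nm ∘ s = Nm`.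
Conversely, an `s`-invariant character of `Kˣ` kills the norm-one elements: by Hilbert 90
these are the quotients `s(β)/β`. Hence it factors through `Kˣ/ker Nm ≅ Nm(Kˣ) ≤ Fˣ`, and
the resulting character of `Nm(Kˣ)` extends to `Fˣ` because `ℂˣ` is divisible.
-/

open Module

noncomputable instance IsAlgClosed.divisibleByNatAdditiveUnits {k : Type*} [Field k]
    [IsAlgClosed k] : DivisibleBy (Additive kˣ) ℕ :=
  divisibleByOfSMulRightSurj _ _ fun {n} hn x => by
    obtain ⟨z, hz⟩ := IsAlgClosed.exists_pow_nat_eq (x.toMul : k) (Nat.pos_of_ne_zero hn)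
    have hz0 : z ≠ 0 := by
      rintro rfl
      exact x.toMul.ne_zero (by simpa [hn] using hz.symm)
    exact ⟨Additive.ofMul (Units.mk0 z hz0),
      Additive.toMul.injective (Units.ext (by simpa using hz))⟩

noncomputable instance IsAlgClosed.divisibleByIntAdditiveUnits {k : Type*} [Field k]
    [IsAlgClosed k] : DivisibleBy (Additive kˣ) ℤ :=
  AddGroup.divisibleByIntOfDivisibleByNat _

theorem MonoidHom.exists_comp_eq_of_ker_le {G H A : Type*} [CommGroup G] [CommGroup H]
    [CommGroup A] [DivisibleBy (Additive A) ℤ] (ν : G →* H) (δ : G →* A)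
    (h : ν.ker ≤ δ.ker) : ∃ θ : H →* A, θ.comp ν = δ := by
  obtain ⟨θ, hθ⟩ := (Module.Baer.of_divisible (Additive A)).extension_property_addMonoidHom
    (QuotientGroup.kerLift ν).toAdditive (QuotientGroup.kerLift_injective ν)
    (QuotientGroup.lift ν.ker δ h).toAdditive
  exact ⟨MonoidHom.toAdditive.symm θ, MonoidHom.ext fun x =>
    DFunLike.congr_fun hθ (Additive.ofMul (x : G ⧸ ν.ker))⟩

section QuadraticExtension

variable {F K : Type*} [Field F] [Field K] [Algebra F K] [IsGalois F K]

theorem AlgEquiv.card_eq_two_of_finrank_eq_two (h2 : finrank F K = 2) :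
    Nat.card (K ≃ₐ[F] K) = 2 := by
  have : FiniteDimensional F K := .of_finrank_pos (by omega)
  rw [IsGalois.card_aut_eq_finrank, h2]

theorem AlgEquiv.apply_apply_of_finrank_eq_two (h2 : finrank F K = 2) (s : K ≃ₐ[F] K) (x : K) :
    s (s x) = x := by
  have hss : s ^ 2 = 1 := by
    simpa [AlgEquiv.card_eq_two_of_finrank_eq_two h2] using pow_card_eq_one' (x := s)
  rw [← AlgEquiv.mul_apply, ← pow_two, hss, AlgEquiv.one_apply]

theorem AlgEquiv.units_map_units_map_of_finrank_eq_two (h2 : finrank F K = 2) (s : K ≃ₐ[F] K)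
    (x : Kˣ) : Units.map (s : K →* K) (Units.map (s : K →* K) x) = x :=
  Units.ext (AlgEquiv.apply_apply_of_finrank_eq_two h2 s x)

theorem AlgEquiv.eq_one_or_eq_of_finrank_eq_two (h2 : finrank F K = 2) {s : K ≃ₐ[F] K}
    (hs : s ≠ 1) (g : K ≃ₐ[F] K) : g = 1 ∨ g = s := by
  obtain ⟨t, -, ht⟩ := (Nat.card_eq_two_iff' 1).1 (AlgEquiv.card_eq_two_of_finrank_eq_two h2)
  rw [or_iff_not_imp_left]
  intro hg
  rw [ht g hg, ht s hs]

theorem exists_units_map_div_eq_of_mul_apply_eq_one (h2 : finrank F K = 2) {s : K ≃ₐ[F] K}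
    (hs : s ≠ 1) {x : Kˣ} (hx : (x : K) * s x = 1) :
    ∃ β : Kˣ, Units.map (s : K →* K) β / β = x := by
  classical
  have : FiniteDimensional F K := .of_finrank_pos (by omega)
  have hsx : Units.map (s : K →* K) x * x = 1 := Units.ext (by simpa [mul_comm] using hx)
  have hss : s * s = 1 := AlgEquiv.ext (AlgEquiv.apply_apply_of_finrank_eq_two h2 s)
  -- `1 ↦ 1, s ↦ x` is a 1-cocycle precisely because `x · s x = 1`.
  let f : (K ≃ₐ[F] K) → Kˣ := fun g => if g = 1 then 1 else x
  have hf : groupCohomology.IsMulCocycle₁ f := by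
    intro g h
    rcases AlgEquiv.eq_one_or_eq_of_finrank_eq_two h2 hs g with rfl | rfl <;>
      rcases AlgEquiv.eq_one_or_eq_of_finrank_eq_two h2 hs h with rfl | rfl <;>
      simp [f, hs, hss, AlgEquiv.smul_units_def, hsx]
  obtain ⟨β, hβ⟩ := groupCohomology.isMulCoboundary₁_of_isMulCocycle₁_of_aut_to_units f hf
  exact ⟨β, by simpa [f, hs, AlgEquiv.smul_units_def] using hβ s⟩

variable (ν : Kˣ →* Fˣ)

theorem norm_units_map_eq (h2 : finrank F K = 2) {s : K ≃ₐ[F] K}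
    (hν : ∀ x : Kˣ, (algebraMap F K (ν x) : K) = (x : K) * s (x : K)) (x : Kˣ) :
    ν (Units.map (s : K →* K) x) = ν x := by
  refine Units.ext ((algebraMap F K).injective ?_)
  rw [hν, hν, Units.coe_map, MonoidHom.coe_coe, AlgEquiv.apply_apply_of_finrank_eq_two h2,
    mul_comm]

theorem ker_norm_le_ker_of_units_map_eq {A : Type*} [Group A] (h2 : finrank F K = 2)
    {s : K ≃ₐ[F] K} (hs : s ≠ 1)
    (hν : ∀ x : Kˣ, (algebraMap F K (ν x) : K) = (x : K) * s (x : K))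
    (δ : Kˣ →* A) (hδ : ∀ x, δ (Units.map (s : K →* K) x) = δ x) :
    ν.ker ≤ δ.ker := by
  intro x hx
  have hx1 : (x : K) * s x = 1 := by simpa [MonoidHom.mem_ker.1 hx] using (hν x).symm
  obtain ⟨β, rfl⟩ := exists_units_map_div_eq_of_mul_apply_eq_one h2 hs hx1
  rw [MonoidHom.mem_ker, map_div, hδ, div_self']

end QuadraticExtension

/-- `F ⊆ K` Galois of degree 2 with nontrivial automorphism `s` and norm
map `ν : Kˣ →* Fˣ` (`ν x = x · s x`).  For a character `χ : Kˣ →* ℂˣ`, the character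
`χ^s/χ : x ↦ χ(s x)·χ(x)⁻¹` factors through the norm iff it is quadratic, i.e.
`(χ(s x)·χ(x)⁻¹)² = 1` for all `x ∈ Kˣ`. -/
theorem stmt_3 {F K : Type*} [Field F] [Field K] [Algebra F K] [IsGalois F K]
    (h2 : Module.finrank F K = 2)
    (s : K ≃ₐ[F] K) (hs : s ≠ AlgEquiv.refl)
    (ν : Kˣ →* Fˣ)
    (hν : ∀ x : Kˣ, (algebraMap F K (ν x) : K) = (x : K) * s (x : K))
    (χ : Kˣ →* ℂˣ) :
    (∃ θ : Fˣ →* ℂˣ, ∀ x : Kˣ,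
        χ (Units.map (s : K →* K) x) * (χ x)⁻¹ = θ (ν x)) ↔
      (∀ x : Kˣ, (χ (Units.map (s : K →* K) x) * (χ x)⁻¹) ^ 2 = 1) := by
  set σ : Kˣ →* Kˣ := Units.map (s : K →* K)
  let δ : Kˣ →* ℂˣ := χ.comp σ / χ
  have hδσ (x : Kˣ) : δ (σ x) = (δ x)⁻¹ := by
    simp [δ, σ, AlgEquiv.units_map_units_map_of_finrank_eq_two h2]
  have hquad : (∀ x, δ x ^ 2 = 1) ↔ ∀ x, δ (σ x) = δ x := by
    simp only [hδσ, inv_eq_iff_mul_eq_one, pow_two]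
  change (∃ θ : Fˣ →* ℂˣ, ∀ x, δ x = θ (ν x)) ↔ ∀ x, δ x ^ 2 = 1
  rw [hquad]
  constructor
  · rintro ⟨θ, hθ⟩ x
    rw [hθ, hθ, norm_units_map_eq ν h2 hν]
  · intro hinv
    obtain ⟨θ, hθ⟩ :=
      ν.exists_comp_eq_of_ker_le δ (ker_norm_le_ker_of_units_map_eq ν h2 hs hν δ hinv)
    exact ⟨θ, fun x => (DFunLike.congr_fun hθ x).symm⟩
end

section
/- For every integer k ≥ 1, let U_k ≤ (ℤ/3^{⌈k/2⌉}ℤ)^× be the subgroup { N(x) mod 3^{⌈k/2⌉} : x ∈ ℤ[√3] whose class modulo (√3)^k is a unit }. Then the quotient group (ℤ/3^{⌈k/2⌉}ℤ)^× / U_k has order 2 and is generated by the class of −1; in particular, −1 mod 3^{⌈k/2⌉} does not lie in U_k. -/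
/-! Modulo `3` the norm `a² - 3b²` is `a²`, so a norm that is a unit modulo `3 ^ m` is `≡ 1 mod 3`.
Conversely, the units `≡ 1 mod 3` form the kernel of `(ℤ/3^m)ˣ → (ℤ/3)ˣ`, a group of odd order
`3 ^ (m - 1)`; so each of them is a square `n²`, the norm of the integer `n`, which is prime to `3`
and hence a unit modulo `(√3)^k`. Thus `U_k` is that kernel, and the quotient is `(ℤ/3)ˣ = {±1}`. -/

namespace ZMod

variable {p m : ℕ} [Fact p.Prime]

lemma card_quotient_ker_unitsMap_prime_pow (hm : m ≠ 0) :
    Nat.card ((ZMod (p ^ m))ˣ ⧸ (unitsMap (dvd_pow_self p hm)).ker) = p - 1 := by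
  have : NeZero (p ^ m) := ⟨pow_ne_zero m (Fact.out : p.Prime).ne_zero⟩
  rw [Nat.card_congr (QuotientGroup.quotientKerEquivOfSurjective _
    (unitsMap_surjective _)).toEquiv, Nat.card_eq_fintype_card, card_units]

lemma card_ker_unitsMap_prime_pow (hm : m ≠ 0) :
    Nat.card (unitsMap (dvd_pow_self p hm)).ker = p ^ (m - 1) := by
  have hp : p.Prime := Fact.out
  have h := Subgroup.card_eq_card_quotient_mul_card_subgroup (unitsMap (dvd_pow_self p hm)).ker
  rw [card_quotient_ker_unitsMap_prime_pow hm, Nat.card_eq_fintype_card, card_units_eq_totient,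
    Nat.totient_prime_pow hp (Nat.pos_of_ne_zero hm), mul_comm] at h
  exact (Nat.eq_of_mul_eq_mul_left (Nat.sub_pos_of_lt hp.one_lt) h).symm

lemma exists_sq_eq_of_mem_ker_unitsMap (hp : p ≠ 2) (hm : m ≠ 0) {v : (ZMod (p ^ m))ˣ}
    (hv : v ∈ (unitsMap (dvd_pow_self p hm)).ker) : ∃ w, w ^ 2 = v := by
  have hodd : (Nat.card (unitsMap (dvd_pow_self p hm)).ker).Coprime 2 := by
    rw [card_ker_unitsMap_prime_pow hm, Nat.coprime_two_right]
    exact ((Fact.out : p.Prime).odd_of_ne_two hp).pow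
  obtain ⟨w, hw⟩ := (Nat.Coprime.pow_left_bijective hodd).2 ⟨v, hv⟩
  exact ⟨w, congrArg Subtype.val hw⟩

end ZMod

namespace Zsqrtd

variable {d : ℤ}

lemma intCast_norm_eq_re_sq {n : ℕ} (hd : (n : ℤ) ∣ d) (x : ℤ√d) :
    (x.norm : ZMod n) = (x.re : ZMod n) ^ 2 := by
  have hd0 : (d : ZMod n) = 0 := (ZMod.intCast_zmod_eq_zero_iff_dvd d n).2 hd
  rw [norm_def]
  push_cast
  rw [hd0]
  ring

lemma isUnit_mk_intCast_of_isCoprime {n : ℤ} (h : IsCoprime n d) (k : ℕ) :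
    IsUnit (Ideal.Quotient.mk (Ideal.span {(sqrtd : ℤ√d) ^ k}) (n : ℤ√d)) := by
  obtain ⟨a, b, hab⟩ := h.pow_right (n := k)
  have hdk : Ideal.Quotient.mk (Ideal.span {(sqrtd : ℤ√d) ^ k}) ((d : ℤ√d) ^ k) = 0 := by
    rw [Ideal.Quotient.eq_zero_iff_mem, Ideal.mem_span_singleton, ← dmuld, mul_pow]
    exact dvd_mul_right _ _
  refine IsUnit.of_mul_eq_one (Ideal.Quotient.mk _ (a : ℤ√d)) ?_
  have hab' : (n : ℤ√d) * a = 1 - b * (d : ℤ√d) ^ k := by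
    rw [eq_sub_iff_add_eq, mul_comm]; exact_mod_cast hab
  rw [← map_mul, hab', map_sub, map_mul, hdk, mul_zero, sub_zero, map_one]

end Zsqrtd

open Zsqrtd ZMod in
lemma mem_ker_unitsMap_three_iff_exists_norm (k : ℕ) {m : ℕ} (hm : m ≠ 0)
    (v : (ZMod (3 ^ m))ˣ) :
    v ∈ (unitsMap (dvd_pow_self 3 hm)).ker ↔ ∃ x : ℤ√3,
      IsUnit (Ideal.Quotient.mk (Ideal.span {(sqrtd : ℤ√3) ^ k}) x) ∧
        (x.norm : ZMod (3 ^ m)) = v := by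
  constructor
  · intro hv
    obtain ⟨w, rfl⟩ := exists_sq_eq_of_mem_ker_unitsMap (by decide) hm hv
    have hcop : IsCoprime ((w : ZMod (3 ^ m)).val : ℤ) 3 :=
      Nat.isCoprime_iff_coprime.2 ((val_coe_unit_coprime w).coprime_dvd_right (dvd_pow_self 3 hm))
    refine ⟨_, isUnit_mk_intCast_of_isCoprime hcop k, ?_⟩
    rw [norm_intCast]
    push_cast
    rw [natCast_zmod_val, sq]
  · rintro ⟨x, -, hx⟩
    have hre : ((unitsMap (dvd_pow_self 3 hm) v : (ZMod 3)ˣ) : ZMod 3) = (x.re : ZMod 3) ^ 2 := by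
      rw [unitsMap_val, ← hx, cast_intCast (dvd_pow_self 3 hm), intCast_norm_eq_re_sq (by norm_num)]
    have hsq_unit : ∀ r : ZMod 3, IsUnit (r ^ 2) → r ^ 2 = 1 := by decide
    rw [MonoidHom.mem_ker, Units.ext_iff, Units.val_one, hre]
    exact hsq_unit _ (hre ▸ (unitsMap (dvd_pow_self 3 hm) v).isUnit)

/-- For every `k ≥ 1`, let `U_k ≤ (ℤ/3^⌈k/2⌉ℤ)ˣ` be the subgroup of norms
`N(x) mod 3^⌈k/2⌉` of elements `x ∈ ℤ[√3]` that are units modulo `(√3)^k`.  Then the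
quotient `(ℤ/3^⌈k/2⌉ℤ)ˣ / U_k` has order 2 and is generated by the class of `-1`;
in particular `-1 ∉ U_k`. -/
theorem stmt_7 (k : ℕ) (hk : 1 ≤ k)
    (U : Subgroup (ZMod (3 ^ ((k + 1) / 2)))ˣ)
    (hU : ∀ v : (ZMod (3 ^ ((k + 1) / 2)))ˣ,
      v ∈ U ↔ ∃ x : Zsqrtd 3,
        IsUnit (Ideal.Quotient.mk (Ideal.span {(Zsqrtd.sqrtd : Zsqrtd 3) ^ k}) x) ∧
        (Zsqrtd.norm x : ZMod (3 ^ ((k + 1) / 2))) = (v : ZMod (3 ^ ((k + 1) / 2)))) :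
    Nat.card ((ZMod (3 ^ ((k + 1) / 2)))ˣ ⧸ U) = 2 ∧
    Subgroup.zpowers
      (QuotientGroup.mk (-1 : (ZMod (3 ^ ((k + 1) / 2)))ˣ) :
        (ZMod (3 ^ ((k + 1) / 2)))ˣ ⧸ U) = ⊤ ∧
    (-1 : (ZMod (3 ^ ((k + 1) / 2)))ˣ) ∉ U := by
  have hm : (k + 1) / 2 ≠ 0 := by omega
  obtain rfl : U = (ZMod.unitsMap (dvd_pow_self 3 hm)).ker := by
    ext v
    rw [hU, mem_ker_unitsMap_three_iff_exists_norm k hm]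
  have hcard : Nat.card (_ ⧸ (ZMod.unitsMap (dvd_pow_self 3 hm)).ker) = 2 :=
    ZMod.card_quotient_ker_unitsMap_prime_pow hm
  have hneg : (-1 : (ZMod (3 ^ ((k + 1) / 2)))ˣ) ∉ (ZMod.unitsMap (dvd_pow_self 3 hm)).ker := by
    rw [MonoidHom.mem_ker, Units.ext_iff, ZMod.unitsMap_val, Units.val_neg, Units.val_one,
      ZMod.cast_neg (dvd_pow_self 3 hm), ZMod.cast_one (dvd_pow_self 3 hm), Units.val_one]
    decide
  refine ⟨hcard, zpowers_eq_top_of_prime_card hcard ?_, hneg⟩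
  rwa [ne_eq, QuotientGroup.eq_one_iff]
end
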